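/- Let G be a plane graph with layers L_1,…,L_r, let D be a ve-dominating set of G, let k_i = |D ∩ L_i|, and let c_i be the number of 3-non-vacuous layer components of layer L_i. Then c_i ≤ k_{i+1} + k_{i+2} + k_{i+3} + k_{i+4}. -/

import Mathlib

/-- `(T, X)` is a tree-decomposition of `G`: `T` is a tree, every vertex of `G`
is in some bag, every edge of `G` has both endpoints in some common bag, and for
every node `j` on the (unique) path between nodes `i` and `k` of `T`, we have
`X i ∩ X k ⊆ X j`. -/
def IsTreeDecomp {V ι : Type*} (G : SimpleGraph V) (T : SimpleGraph ι) (X : ι → Set V) : Prop :=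
  T.IsTree ∧
  (∀ v : V, ∃ i : ι, v ∈ X i) ∧
  (∀ u v : V, G.Adj u v → ∃ i : ι, u ∈ X i ∧ v ∈ X i) ∧
  (∀ i k : ι, ∀ p : T.Walk i k, p.IsPath → ∀ j ∈ p.support, X i ∩ X k ⊆ X j)

/-- With respect to the root `r`, the node `k` lies in the subtree rooted at `j`
(i.e. `k` is `j` or a descendant of `j`): every path from `r` to `k` passes
through `j`. -/
def InSubtree {ι : Type*} (T : SimpleGraph ι) (r j k : ι) : Prop :=
  ∀ p : T.Walk r k, p.IsPath → j ∈ p.support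

/-- With respect to the root `r`, the node `j` is a child of the node `i`. -/
def IsChild {ι : Type*} (T : SimpleGraph ι) (r i j : ι) : Prop :=
  T.Adj i j ∧ InSubtree T r i j

/-- `V_i`: the union of the bags over the subtree rooted at `i`. -/
def SubtreeVerts {V ι : Type*} (T : SimpleGraph ι) (X : ι → Set V) (r i : ι) : Set V :=
  ⋃ k ∈ {k : ι | InSubtree T r i k}, X k

open Set

/-- `G` has treewidth at most `w`: there is a tree-decomposition all of whose
bags have at most `w + 1` vertices. -/
def HasTreewidthLE {V : Type*} (G : SimpleGraph V) (w : ℕ) : Prop :=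
  ∃ (ι : Type) (T : SimpleGraph ι) (X : ι → Set V),
    IsTreeDecomp G T X ∧ ∀ i : ι, (X i).ncard ≤ w + 1

/-- `pos` is a good (crossing-free, straight-line) drawing of the subgraph of
`G` induced by `A`: vertices are distinct points, no vertex lies in the
interior of an edge, and two distinct edges meet only in common endpoints. -/
def GoodDrawing {V : Type*} (G : SimpleGraph V) (pos : V → ℝ × ℝ) (A : Set V) : Prop :=
  Set.InjOn pos A ∧
  (∀ u v w : V, u ∈ A → v ∈ A → w ∈ A → G.Adj u v → w ≠ u → w ≠ v →
    pos w ∉ segment ℝ (pos u) (pos v)) ∧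
  (∀ u v x y : V, u ∈ A → v ∈ A → x ∈ A → y ∈ A → G.Adj u v → G.Adj x y →
    ({u, v} : Set V) ≠ {x, y} →
    ∀ p ∈ segment ℝ (pos u) (pos v) ∩ segment ℝ (pos x) (pos y),
      p ∈ ({pos u, pos v} : Set (ℝ × ℝ)) ∩ {pos x, pos y})

/-- The set of points of the plane covered by the drawing of `G[A]`. -/
def DrawSet {V : Type*} (G : SimpleGraph V) (pos : V → ℝ × ℝ) (A : Set V) :
    Set (ℝ × ℝ) :=
  (pos '' A) ∪
    ⋃ (u : V) (v : V) (_ : u ∈ A) (_ : v ∈ A) (_ : G.Adj u v),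
      segment ℝ (pos u) (pos v)

/-- The vertices of `A` lying on the boundary of the outer (unbounded) face of
the drawing of `G[A]`. -/
def OuterVerts {V : Type*} (G : SimpleGraph V) (pos : V → ℝ × ℝ) (A : Set V) :
    Set V :=
  {v ∈ A | pos v ∈ closure {p : ℝ × ℝ | p ∉ DrawSet G pos A ∧
    ¬ Bornology.IsBounded (connectedComponentIn (DrawSet G pos A)ᶜ p)}}

/-- The vertices remaining after `n` times peeling off the outer layer. -/
def RemainSet {V : Type*} (G : SimpleGraph V) (pos : V → ℝ × ℝ) : ℕ → Set V
  | 0 => Set.univ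
  | n + 1 => RemainSet G pos n \ OuterVerts G pos (RemainSet G pos n)

/-- The `i`-th layer `L_i` of the drawing (for `i ≥ 1`). -/
def LayerSet {V : Type*} (G : SimpleGraph V) (pos : V → ℝ × ℝ) (i : ℕ) : Set V :=
  RemainSet G pos (i - 1) \ RemainSet G pos i

/-- `pos` is a (straight-line) plane embedding of `G`. -/
def IsPlanarEmb {V : Type*} (G : SimpleGraph V) (pos : V → ℝ × ℝ) : Prop :=
  GoodDrawing G pos Set.univ

/-- The closed neighborhood `N[D]` of a vertex set `D` in a simple graph `G`. -/
def closedNbhd {V : Type*} (G : SimpleGraph V) (D : Set V) : Set V :=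
  D ∪ {v | ∃ d ∈ D, G.Adj d v}

/-- `D` is a vertex-edge dominating set. -/
def IsVeDomSet {V : Type*} (G : SimpleGraph V) (D : Set V) : Prop :=
  ∀ u v : V, G.Adj u v →
    ∃ w ∈ D, u ∈ closedNbhd G {w} ∨ v ∈ closedNbhd G {w}

/-- The subgraph of `G` induced by `C` is connected. -/
def ConnInduced {V : Type*} (G : SimpleGraph V) (C : Set V) : Prop :=
  (G.induce C).Connected

/-- `C` has no cut vertex (every vertex-deleted induced subgraph stays
connected, or becomes empty). -/
def NoCutVertex {V : Type*} (G : SimpleGraph V) (C : Set V) : Prop :=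
  ∀ x ∈ C, (C \ {x}) = ∅ ∨ ConnInduced G (C \ {x})

/-- `C` is (the vertex set of) a block of the subgraph of `G` induced by `A`:
a maximal connected subset of `A` without a cut vertex. -/
def IsBlockOf {V : Type*} (G : SimpleGraph V) (A C : Set V) : Prop :=
  C ⊆ A ∧ C.Nonempty ∧ ConnInduced G C ∧ NoCutVertex G C ∧
  (∀ C' : Set V, C ⊆ C' → C' ⊆ A → ConnInduced G C' → NoCutVertex G C' → C' = C)

/-- The region of the plane enclosed by the drawing of `G[C]`: the union of the
bounded complementary components of the drawing. -/
def EnclosedRegion {V : Type*} (G : SimpleGraph V) (pos : V → ℝ × ℝ) (C : Set V) :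
    Set (ℝ × ℝ) :=
  {p : ℝ × ℝ | p ∉ DrawSet G pos C ∧
    Bornology.IsBounded (connectedComponentIn (DrawSet G pos C)ᶜ p)}

/-- `C` is a layer component of layer `L_i`: a block of `G[L_i]`. -/
def IsLayerComp {V : Type*} (G : SimpleGraph V) (pos : V → ℝ × ℝ) (i : ℕ)
    (C : Set V) : Prop :=
  IsBlockOf G (LayerSet G pos i) C

/-- `C` (a layer component of layer `L_i`) is `s`-non-vacuous: for `s = 1`,
some vertex of `L_{i+1}` lies inside the region enclosed by `C`; for `s > 1`,
some `(s-1)`-non-vacuous layer component of `L_{i+1}` lies inside that region. -/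
def SNonVacuous {V : Type*} (G : SimpleGraph V) (pos : V → ℝ × ℝ) :
    ℕ → ℕ → Set V → Prop
  | 0, _, _ => True
  | 1, i, C => ∃ v ∈ LayerSet G pos (i + 1), pos v ∈ EnclosedRegion G pos C
  | s + 2, i, C => ∃ C' : Set V, IsLayerComp G pos (i + 1) C' ∧
      SNonVacuous G pos (s + 1) (i + 1) C' ∧
      ∀ v ∈ C', pos v ∈ EnclosedRegion G pos C

/-- `k_i = |D ∩ L_i|`. -/
noncomputable def layerK {V : Type*} (G : SimpleGraph V) (pos : V → ℝ × ℝ)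
    (D : Set V) (i : ℕ) : ℕ :=
  (D ∩ LayerSet G pos i).ncard

/-- `c_i`: the number of `3`-non-vacuous layer components of layer `L_i`. -/
noncomputable def threeNVCount {V : Type*} (G : SimpleGraph V) (pos : V → ℝ × ℝ)
    (i : ℕ) : ℕ :=
  {C : Set V | IsLayerComp G pos i C ∧ SNonVacuous G pos 3 i C}.ncard

/-!
A 3-non-vacuous layer component `C` of `L_i` encloses a layer component `C'` of `L_{i+1}`, which
encloses a layer component `C''` of `L_{i+2}`, which encloses a vertex of `L_{i+3}`; so `C''`
carries an edge. A vertex `w ∈ D` dominating that edge is adjacent to or on `C''`, hence lies in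
`L_{i+1} ∪ L_{i+2} ∪ L_{i+3}` (an edge joins equal or consecutive layers), and `w` is a vertex of
`C'` or lies inside it. The map `C ↦ w` is injective because two distinct layer components of one
layer never enclose a common point: as blocks they share at most one vertex, and away from it
each lies in the outer face of the other.
-/

open Bornology

section Topology

variable {X : Type*} [TopologicalSpace X]

lemma IsPreconnected.connectedComponentIn_eq {K S : Set X} (hS : IsPreconnected S)
    (hSK : S ⊆ K) {p q : X} (hp : p ∈ S) (hq : q ∈ S) :
    _root_.connectedComponentIn K p = _root_.connectedComponentIn K q :=
  _root_.connectedComponentIn_eq (hS.subset_connectedComponentIn hp hSK hq)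

lemma mem_connectedComponentIn_of_mem_closure [LocallyConnectedSpace X] {F : Set X}
    (hF : IsOpen F) {p q : X}
    (hq : q ∈ closure (connectedComponentIn F p)) (hqF : q ∈ F) :
    q ∈ connectedComponentIn F p := by
  obtain ⟨r, hrq, hrp⟩ := mem_closure_iff.1 hq _ hF.connectedComponentIn
    (mem_connectedComponentIn hqF)
  rw [connectedComponentIn_eq hrp, ← connectedComponentIn_eq hrq]
  exact mem_connectedComponentIn hqF

end Topology

section Drawing

variable {V : Type*} {G : SimpleGraph V} {pos : V → ℝ × ℝ}

lemma mem_drawSet_iff {A : Set V} {q : ℝ × ℝ} :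
    q ∈ DrawSet G pos A ↔ (∃ c ∈ A, pos c = q) ∨
      ∃ u ∈ A, ∃ v ∈ A, G.Adj u v ∧ q ∈ segment ℝ (pos u) (pos v) := by
  simp [DrawSet, and_comm, and_left_comm]

lemma drawSet_mono {A B : Set V} (h : A ⊆ B) : DrawSet G pos A ⊆ DrawSet G pos B := by
  intro q hq
  rw [mem_drawSet_iff] at hq ⊢
  rcases hq with ⟨c, hc, rfl⟩ | ⟨u, hu, v, hv, huv, hq⟩
  exacts [Or.inl ⟨c, h hc, rfl⟩, Or.inr ⟨u, h hu, v, h hv, huv, hq⟩]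

lemma pos_mem_drawSet {A : Set V} {v : V} (hv : v ∈ A) : pos v ∈ DrawSet G pos A :=
  mem_drawSet_iff.2 (Or.inl ⟨v, hv, rfl⟩)

lemma segment_subset_drawSet {A : Set V} {u v : V} (hu : u ∈ A) (hv : v ∈ A)
    (huv : G.Adj u v) : segment ℝ (pos u) (pos v) ⊆ DrawSet G pos A := fun _ hq =>
  mem_drawSet_iff.2 (Or.inr ⟨u, hu, v, hv, huv, hq⟩)

lemma isCompact_drawSet [Finite V] (A : Set V) : IsCompact (DrawSet G pos A) := by
  refine (A.toFinite.image pos).isCompact.union (isCompact_iUnion fun u => isCompact_iUnion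
    fun v => isCompact_iUnion fun _ => isCompact_iUnion fun _ => isCompact_iUnion fun _ => ?_)
  rw [segment_eq_image_lineMap]
  exact isCompact_Icc.image AffineMap.lineMap_continuous

lemma isClosed_drawSet [Finite V] (A : Set V) : IsClosed (DrawSet G pos A) :=
  (isCompact_drawSet A).isClosed

namespace IsPlanarEmb

variable (hemb : IsPlanarEmb G pos)
include hemb

lemma injective : Function.Injective pos := fun _ _ h =>
  hemb.1 (mem_univ _) (mem_univ _) h

lemma pos_notMem_drawSet {B : Set V} {u : V} (hu : u ∉ B) : pos u ∉ DrawSet G pos B := by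
  intro h
  rcases mem_drawSet_iff.1 h with ⟨c, hc, hcu⟩ | ⟨x, hx, y, hy, hxy, hseg⟩
  · exact hu (hemb.injective hcu ▸ hc)
  · exact hemb.2.1 x y u trivial trivial trivial hxy (by rintro rfl; exact hu hx)
      (by rintro rfl; exact hu hy) hseg

lemma mem_of_pos_mem_drawSet {B : Set V} {u : V} (h : pos u ∈ DrawSet G pos B) : u ∈ B :=
  not_not.1 fun hu => hemb.pos_notMem_drawSet hu h

lemma eq_of_mem_segment_of_mem_drawSet {B : Set V} {u v : V} (huv : G.Adj u v) (hu : u ∉ B)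
    {q : ℝ × ℝ} (hq : q ∈ segment ℝ (pos u) (pos v)) (hqB : q ∈ DrawSet G pos B) :
    q = pos v := by
  rcases mem_drawSet_iff.1 hqB with ⟨c, hc, rfl⟩ | ⟨x, hx, y, hy, hxy, hqxy⟩
  · by_contra hne
    exact hemb.2.1 u v c trivial trivial trivial huv (by rintro rfl; exact hu hc)
      (by rintro rfl; exact hne rfl) hq
  · have hne : ({u, v} : Set V) ≠ {x, y} := by
      intro h
      have : u ∈ ({x, y} : Set V) := h ▸ mem_insert u {v}
      rcases this with rfl | rfl
      exacts [hu hx, hu hy]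
    rcases (hemb.2.2 u v x y trivial trivial trivial trivial huv hxy hne q ⟨hq, hqxy⟩).1
      with rfl | rfl
    · exact absurd hqB (hemb.pos_notMem_drawSet hu)
    · rfl

lemma segment_disjoint_drawSet {B : Set V} {u v : V} (huv : G.Adj u v) (hu : u ∉ B)
    (hv : v ∉ B) : Disjoint (segment ℝ (pos u) (pos v)) (DrawSet G pos B) :=
  disjoint_left.2 fun _ hq hqB => hemb.pos_notMem_drawSet hv
    (hemb.eq_of_mem_segment_of_mem_drawSet huv hu hq hqB ▸ hqB)

lemma pos_mem_enclosedRegion_of_adj {C : Set V} {w u : V} (hwu : G.Adj w u) (hw : w ∉ C)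
    (hu : u ∉ C) (h : pos u ∈ EnclosedRegion G pos C) : pos w ∈ EnclosedRegion G pos C :=
  ⟨hemb.pos_notMem_drawSet hw, (convex_segment _ _).isPreconnected.connectedComponentIn_eq
    (hemb.segment_disjoint_drawSet hwu hw hu).subset_compl_right
    (right_mem_segment ℝ _ _) (left_mem_segment ℝ _ _) ▸ h.2⟩

end IsPlanarEmb

end Drawing

section Plane

variable {E : Type*} [NormedAddCommGroup E] [NormedSpace ℝ E]

lemma isPreconnected_insert_openSegment (a b : E) :
    IsPreconnected (insert a (openSegment ℝ a b)) :=
  (convex_openSegment a b).isPreconnected.subset_closure (subset_insert _ _)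
    (insert_subset (segment_subset_closure_openSegment (left_mem_segment ℝ a b)) subset_closure)

lemma not_isBounded_connectedComponentIn_compl_of_finite (hE : 1 < Module.rank ℝ E)
    {S : Set E} (hS : S.Finite) {p : E} (hp : p ∉ S) :
    ¬ IsBounded (connectedComponentIn Sᶜ p) := by
  rw [(hS.countable.isPathConnected_compl_of_one_lt_rank hE).isConnected.isPreconnected
    |>.connectedComponentIn hp]
  intro hb
  have : Nontrivial E := (rank_pos_iff_nontrivial (R := ℝ)).1 (zero_lt_one.trans hE)
  exact NormedSpace.unbounded_univ ℝ E (union_compl_self S ▸ hS.isBounded.union hb)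

/-- Otherwise `U` and the exterior of `closure U` would disconnect `Zᶜ`. -/
lemma exists_mem_closure_diff_notMem [Nontrivial E] {U Z : Set E} (hU : IsOpen U)
    (hUb : IsBounded U) (hZ : IsPreconnected Zᶜ) (hZb : IsBounded Z) {p : E} (hpU : p ∈ U)
    (hpZ : p ∉ Z) : ∃ q ∈ closure U \ U, q ∉ Z := by
  by_contra! h
  have hcover : Zᶜ ⊆ U ∪ (closure U)ᶜ := fun q hqZ => by
    by_cases hqU : q ∈ U
    · exact Or.inl hqU
    · exact Or.inr fun hq => hqZ (h q ⟨hq, hqU⟩)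
  obtain ⟨r, hr⟩ : ((closure U ∪ Z)ᶜ).Nonempty := nonempty_compl.2 fun huniv =>
    NormedSpace.unbounded_univ ℝ E (huniv ▸ hUb.closure.union hZb)
  rw [compl_union] at hr
  obtain ⟨q, -, hqU, hqU'⟩ := hZ U (closure U)ᶜ hU isClosed_closure.isOpen_compl hcover
    ⟨p, hpZ, hpU⟩ ⟨r, hr.2, hr.1⟩
  exact hqU' (subset_closure hqU)

/-- The component `V₁` of `p` in `K₁ᶜ` misses `K₂` by `h₂`, so it lies in the component `W₂` of
`p` in `K₂ᶜ`. A boundary point of `V₁` off `Z` lies on `K₁ \ Z`, hence by `h₁` in an unbounded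
component of `K₂ᶜ`, yet also in the closure of `W₂`, so in `W₂` itself. -/
lemma not_isBounded_connectedComponentIn_compl_of_exterior [Nontrivial E] {K₁ K₂ Z : Set E}
    (hK₁ : IsClosed K₁) (hK₂ : IsClosed K₂) (hZ : IsPreconnected Zᶜ) (hZb : IsBounded Z)
    (hZK₁ : Z ⊆ K₁) (hK₁₂ : K₁ ∩ K₂ ⊆ Z)
    (h₁ : ∀ q ∈ K₁ \ Z, ¬ IsBounded (connectedComponentIn K₂ᶜ q))
    (h₂ : ∀ q ∈ K₂ \ Z, ¬ IsBounded (connectedComponentIn K₁ᶜ q))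
    {p : E} (hp₁ : p ∉ K₁) (hpb₁ : IsBounded (connectedComponentIn K₁ᶜ p)) :
    ¬ IsBounded (connectedComponentIn K₂ᶜ p) := by
  intro hpb₂
  set V₁ := connectedComponentIn K₁ᶜ p
  set W₂ := connectedComponentIn K₂ᶜ p
  have hV₁K₂ : V₁ ⊆ K₂ᶜ := fun q hqV hqK₂ => by
    have hqK₁ : q ∉ K₁ := connectedComponentIn_subset _ _ hqV
    exact h₂ q ⟨hqK₂, fun hqZ => hqK₁ (hZK₁ hqZ)⟩ (connectedComponentIn_eq hqV ▸ hpb₁)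
  have hV₁W₂ : V₁ ⊆ W₂ :=
    isPreconnected_connectedComponentIn.subset_connectedComponentIn
      (mem_connectedComponentIn hp₁) hV₁K₂
  obtain ⟨q, ⟨hqV, hqV'⟩, hqZ⟩ := exists_mem_closure_diff_notMem
    hK₁.isOpen_compl.connectedComponentIn hpb₁ hZ hZb (mem_connectedComponentIn hp₁)
    fun hpZ => hp₁ (hZK₁ hpZ)
  have hqK₁ : q ∈ K₁ := not_not.1 fun hq =>
    hqV' (mem_connectedComponentIn_of_mem_closure hK₁.isOpen_compl hqV hq)
  have hqW : q ∈ W₂ := mem_connectedComponentIn_of_mem_closure hK₂.isOpen_compl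
    (closure_mono hV₁W₂ hqV) fun hqK₂ => hqZ (hK₁₂ ⟨hqK₁, hqK₂⟩)
  exact h₁ q ⟨hqK₁, hqZ⟩ (connectedComponentIn_eq hqW ▸ hpb₂)

end Plane

lemma one_lt_rank_real_prod : 1 < Module.rank ℝ (ℝ × ℝ) := by
  rw [rank_prod', Module.rank_self]
  exact_mod_cast one_lt_two

section Regions

variable {V : Type*} {G : SimpleGraph V} {pos : V → ℝ × ℝ}

def OuterRegion (G : SimpleGraph V) (pos : V → ℝ × ℝ) (A : Set V) : Set (ℝ × ℝ) :=
  {p | p ∉ DrawSet G pos A ∧ ¬ IsBounded (connectedComponentIn (DrawSet G pos A)ᶜ p)}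

lemma outerVerts_subset (A : Set V) : OuterVerts G pos A ⊆ A := fun _ hv => hv.1

lemma outerRegion_anti {A B : Set V} (h : A ⊆ B) :
    OuterRegion G pos B ⊆ OuterRegion G pos A := fun p ⟨hp, hpu⟩ =>
  ⟨fun hpA => hp (drawSet_mono h hpA), fun hb => hpu <| hb.subset <|
    connectedComponentIn_mono p (compl_subset_compl.2 (drawSet_mono h))⟩

variable [Finite V]

lemma isOpen_enclosedRegion (C : Set V) : IsOpen (EnclosedRegion G pos C) := by
  refine isOpen_iff_forall_mem_open.2 fun p ⟨hp, hpb⟩ => ⟨_, fun q hq => ?_,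
    (isClosed_drawSet C).isOpen_compl.connectedComponentIn, mem_connectedComponentIn hp⟩
  exact ⟨connectedComponentIn_subset _ _ hq, connectedComponentIn_eq hq ▸ hpb⟩

lemma mem_outerRegion_of_mem_closure {A : Set V} {q : ℝ × ℝ}
    (hq : q ∈ closure (OuterRegion G pos A)) (hqA : q ∉ DrawSet G pos A) :
    q ∈ OuterRegion G pos A := by
  obtain ⟨r, hrq, hr⟩ := mem_closure_iff.1 hq _
    (isClosed_drawSet A).isOpen_compl.connectedComponentIn (mem_connectedComponentIn hqA)
  exact ⟨hqA, connectedComponentIn_eq hrq ▸ hr.2⟩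

lemma pos_notMem_enclosedRegion {A B : Set V} (hB : B ⊆ A) {v : V}
    (hv : v ∈ OuterVerts G pos A) : pos v ∉ EnclosedRegion G pos B := fun hvB => by
  obtain ⟨r, hrB, hrA⟩ := mem_closure_iff.1 hv.2 _ (isOpen_enclosedRegion B) hvB
  exact (outerRegion_anti hB hrA).2 hrB.2

lemma exists_adj_of_mem_enclosedRegion {C : Set V} {p : ℝ × ℝ}
    (hp : p ∈ EnclosedRegion G pos C) : ∃ a ∈ C, ∃ b ∈ C, G.Adj a b := by
  by_contra! h
  have hC : DrawSet G pos C = pos '' C := by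
    refine subset_antisymm (fun q hq => ?_) subset_union_left
    rcases mem_drawSet_iff.1 hq with hq | ⟨u, hu, v, hv, huv, -⟩
    exacts [hq, absurd huv (h u hu v hv)]
  rw [EnclosedRegion, mem_ofPred_eq, hC] at hp
  exact not_isBounded_connectedComponentIn_compl_of_finite one_lt_rank_real_prod
    (C.toFinite.image pos) hp.1 hp.2

namespace IsPlanarEmb

variable (hemb : IsPlanarEmb G pos)
include hemb

/-- The edge `uv` minus its endpoint `pos v` is connected, misses the drawing of `A` and starts
in the outer face of `A`, so it runs inside that face. -/
lemma mem_outerVerts_of_adj {A : Set V} {u v : V} (huv : G.Adj u v) (hu : u ∉ A)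
    (hu' : pos u ∈ closure (OuterRegion G pos A)) (hv : v ∈ A) : v ∈ OuterVerts G pos A := by
  set S := insert (pos u) (openSegment ℝ (pos u) (pos v))
  have hne : pos u ≠ pos v := fun h => huv.ne (hemb.injective h)
  have hSK : S ⊆ (DrawSet G pos A)ᶜ := by
    rintro q (rfl | hq) hqA
    · exact hemb.pos_notMem_drawSet hu hqA
    · rw [hemb.eq_of_mem_segment_of_mem_drawSet huv hu (openSegment_subset_segment _ _ _ hq)
        hqA] at hq
      exact hne ((right_mem_openSegment_iff (𝕜 := ℝ)).1 hq)
  have huO := mem_outerRegion_of_mem_closure hu' (hemb.pos_notMem_drawSet hu)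
  have hSO : S ⊆ OuterRegion G pos A := fun q hq =>
    ⟨hSK hq, (isPreconnected_insert_openSegment _ _).connectedComponentIn_eq hSK
      (mem_insert _ _) hq ▸ huO.2⟩
  exact ⟨hv, closure_mono (hSO.trans' (subset_insert _ _))
    (segment_subset_closure_openSegment (right_mem_segment ℝ _ _))⟩

end IsPlanarEmb

end Regions

section Layers

variable {V : Type*} {G : SimpleGraph V} {pos : V → ℝ × ℝ}

lemma remainSet_antitone : Antitone (RemainSet G pos) :=
  antitone_nat_of_succ_le fun _ => sdiff_subset

lemma layerSet_zero : LayerSet G pos 0 = ∅ := by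
  simp [LayerSet]

lemma layerSet_succ (n : ℕ) :
    LayerSet G pos (n + 1) = OuterVerts G pos (RemainSet G pos n) := by
  simp only [LayerSet, RemainSet, Nat.add_sub_cancel, sdiff_sdiff_cancel_left (outerVerts_subset _)]

lemma layerSet_succ_subset_remainSet (n : ℕ) : LayerSet G pos (n + 1) ⊆ RemainSet G pos n :=
  sdiff_subset

lemma disjoint_layerSet_of_lt {m n : ℕ} (h : m < n) :
    Disjoint (LayerSet G pos m) (LayerSet G pos n) :=
  disjoint_left.2 fun _ hm hn => hm.2 (remainSet_antitone (Nat.le_sub_one_of_lt h) hn.1)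

lemma pos_mem_closure_outerRegion {u : V} {n : ℕ} (hu : u ∉ RemainSet G pos n) :
    pos u ∈ closure (OuterRegion G pos (RemainSet G pos n)) := by
  induction n with
  | zero => exact absurd trivial hu
  | succ n ih =>
    refine closure_mono (outerRegion_anti (remainSet_antitone n.le_succ)) ?_
    by_cases hun : u ∈ RemainSet G pos n
    · exact (not_not.1 fun h => hu ⟨hun, h⟩ : u ∈ OuterVerts G pos _).2
    · exact ih hun

lemma threeNVCount_zero : threeNVCount G pos 0 = 0 := by
  refine (congrArg ncard ?_).trans (ncard_empty (Set V))
  refine eq_empty_of_forall_notMem fun C ⟨hC, _⟩ => ?_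
  obtain ⟨v, hv⟩ := hC.2.1
  simpa [layerSet_zero] using hC.1 hv

variable [Finite V]

namespace IsPlanarEmb

variable (hemb : IsPlanarEmb G pos)
include hemb

lemma notMem_remainSet_succ_of_adj {u v : V} {n : ℕ} (huv : G.Adj u v)
    (hu : u ∉ RemainSet G pos n) : v ∉ RemainSet G pos (n + 1) := fun hv =>
  hv.2 (hemb.mem_outerVerts_of_adj huv hu (pos_mem_closure_outerRegion hu) hv.1)

lemma mem_layerSet_of_adj {j : ℕ} {u w : V} (hwu : G.Adj w u)
    (hu : u ∈ LayerSet G pos (j + 2)) :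
    w ∈ LayerSet G pos (j + 1) ∨ w ∈ LayerSet G pos (j + 2) ∨ w ∈ LayerSet G pos (j + 3) := by
  obtain ⟨hu₁, hu₂⟩ := hu
  by_cases hw₂ : w ∈ RemainSet G pos (j + 2)
  · exact Or.inr (Or.inr ⟨hw₂, hemb.notMem_remainSet_succ_of_adj hwu.symm hu₂⟩)
  by_cases hw₁ : w ∈ RemainSet G pos (j + 1)
  · exact Or.inr (Or.inl ⟨hw₁, hw₂⟩)
  by_cases hw₀ : w ∈ RemainSet G pos j
  · exact Or.inl ⟨hw₀, hw₁⟩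
  · exact absurd hu₁ (hemb.notMem_remainSet_succ_of_adj hwu hw₀)

end IsPlanarEmb

end Layers

section Blocks

variable {V : Type*} {G : SimpleGraph V}

lemma NoCutVertex.connInduced_diff_singleton {C : Set V} (hnc : NoCutVertex G C)
    (hC : ConnInduced G C) {x : V} (hne : (C \ {x}).Nonempty) : ConnInduced G (C \ {x}) := by
  by_cases hx : x ∈ C
  · exact (hnc x hx).resolve_left hne.ne_empty
  · rwa [sdiff_singleton_eq_self hx]

/-- Deleting one vertex leaves two connected remainders glued along another shared vertex. -/
lemma NoCutVertex.union {B₁ B₂ : Set V} (hn₁ : NoCutVertex G B₁) (hc₁ : ConnInduced G B₁)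
    (hn₂ : NoCutVertex G B₂) (hc₂ : ConnInduced G B₂) (h : (B₁ ∩ B₂).Nontrivial) :
    NoCutVertex G (B₁ ∪ B₂) := by
  intro z _
  obtain ⟨w, hw, hwz⟩ := h.exists_ne z
  right
  rw [union_sdiff_distrib]
  exact SimpleGraph.induce_union_connected
    (hn₁.connInduced_diff_singleton hc₁ ⟨w, hw.1, hwz⟩).preconnected
    (hn₂.connInduced_diff_singleton hc₂ ⟨w, hw.2, hwz⟩).preconnected
    ⟨w, ⟨hw.1, hwz⟩, hw.2, hwz⟩

lemma IsBlockOf.inter_subsingleton {A B₁ B₂ : Set V} (h₁ : IsBlockOf G A B₁)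
    (h₂ : IsBlockOf G A B₂) (hne : B₁ ≠ B₂) : (B₁ ∩ B₂).Subsingleton := by
  refine not_nontrivial_iff.1 fun h => hne ?_
  have hconn : ConnInduced G (B₁ ∪ B₂) := SimpleGraph.induce_union_connected
    h₁.2.2.1.preconnected h₂.2.2.1.preconnected h.nonempty
  have hnc := h₁.2.2.2.1.union h₁.2.2.1 h₂.2.2.2.1 h₂.2.2.1 h
  have hsub := union_subset h₁.1 h₂.1
  rw [← h₁.2.2.2.2 _ subset_union_left hsub hconn hnc,
    h₂.2.2.2.2 _ subset_union_right hsub hconn hnc]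

variable {pos : V → ℝ × ℝ}

lemma joinedIn_drawSet_of_walk {C : Set V} {a b : C} (p : (G.induce C).Walk a b) :
    JoinedIn (DrawSet G pos C) (pos a) (pos b) := by
  induction p with
  | nil => exact JoinedIn.refl (pos_mem_drawSet (Subtype.coe_prop _))
  | @cons a c b h _ ih =>
    have hseg := ((convex_segment (pos a) (pos c)).isPathConnected
      ⟨_, left_mem_segment ℝ _ _⟩).joinedIn _ (left_mem_segment ℝ _ _) _ (right_mem_segment ℝ _ _)
    exact (hseg.mono (segment_subset_drawSet a.2 c.2 (by simpa using h))).trans ih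

lemma ConnInduced.isPreconnected_drawSet {C : Set V} (hC : ConnInduced G C) :
    IsPreconnected (DrawSet G pos C) := by
  obtain ⟨c₀⟩ := hC.nonempty
  have hvert : ∀ c ∈ C, JoinedIn (DrawSet G pos C) (pos c₀) (pos c) := fun c hc =>
    joinedIn_drawSet_of_walk (hC.preconnected c₀ ⟨c, hc⟩).some
  refine IsPathConnected.isConnected ⟨pos c₀, pos_mem_drawSet c₀.2, fun {q} hq => ?_⟩
    |>.isPreconnected
  rcases mem_drawSet_iff.1 hq with ⟨c, hc, rfl⟩ | ⟨u, hu, v, hv, huv, hq⟩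
  · exact hvert c hc
  · refine (hvert u hu).trans (JoinedIn.mono ?_ (segment_subset_drawSet hu hv huv))
    exact ((convex_segment _ _).isPathConnected ⟨_, left_mem_segment ℝ _ _⟩).joinedIn _
      (left_mem_segment ℝ _ _) q hq

namespace IsPlanarEmb

variable (hemb : IsPlanarEmb G pos)
include hemb

lemma drawSet_inter_subset {B₁ B₂ : Set V} (hsub : (B₁ ∩ B₂).Subsingleton) :
    DrawSet G pos B₁ ∩ DrawSet G pos B₂ ⊆ pos '' (B₁ ∩ B₂) := by
  rintro q ⟨hq₁, hq₂⟩
  suffices ∃ c, pos c = q by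
    obtain ⟨c, rfl⟩ := this
    exact ⟨c, ⟨hemb.mem_of_pos_mem_drawSet hq₁, hemb.mem_of_pos_mem_drawSet hq₂⟩, rfl⟩
  rcases mem_drawSet_iff.1 hq₁ with ⟨c, -, hc⟩ | ⟨u, hu, v, hv, huv, hqu⟩
  · exact ⟨c, hc⟩
  rcases mem_drawSet_iff.1 hq₂ with ⟨c, -, hc⟩ | ⟨x, hx, y, hy, hxy, hqx⟩
  · exact ⟨c, hc⟩
  have hne : ({u, v} : Set V) ≠ {x, y} := by
    intro h
    have hB₂ : ∀ z ∈ ({u, v} : Set V), z ∈ B₂ := by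
      rw [h]
      rintro z (rfl | rfl) <;> assumption
    exact huv.ne (hsub ⟨hu, hB₂ u (by simp)⟩ ⟨hv, hB₂ v (by simp)⟩)
  rcases (hemb.2.2 u v x y trivial trivial trivial trivial huv hxy hne q ⟨hqu, hqx⟩).1
    with h | h
  exacts [⟨u, h.symm⟩, ⟨v, h.symm⟩]

lemma insert_openSegment_subset_drawSet_diff {C : Set V} {v x : V} (hv : v ∈ C) (hx : x ∈ C)
    (hvx : G.Adj v x) :
    insert (pos v) (openSegment ℝ (pos v) (pos x)) ⊆ DrawSet G pos C \ {pos x} := by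
  have hne : pos v ≠ pos x := fun h => hvx.ne (hemb.injective h)
  rintro q (rfl | hq)
  · exact ⟨pos_mem_drawSet hv, hne⟩
  · refine ⟨segment_subset_drawSet hv hx hvx (openSegment_subset_segment _ _ _ hq), ?_⟩
    rintro rfl
    exact hne ((right_mem_openSegment_iff (𝕜 := ℝ)).1 hq)

/-- The rest of the block stays connected, and each edge at `x`, minus `pos x`, hangs on its
drawing at the other endpoint. -/
lemma isPreconnected_drawSet_diff_singleton {C : Set V} (hC : ConnInduced G C)
    (hnc : NoCutVertex G C) {x : V} (hne : (C \ {x}).Nonempty) :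
    IsPreconnected (DrawSet G pos C \ {pos x}) := by
  set core := DrawSet G pos (C \ {x})
  have hcore : IsPreconnected core :=
    (hnc.connInduced_diff_singleton hC hne).isPreconnected_drawSet
  have hcoreT : core ⊆ DrawSet G pos C \ {pos x} := fun q hq =>
    ⟨drawSet_mono sdiff_subset hq, fun h : q = pos x =>
      hemb.pos_notMem_drawSet (fun hx => hx.2 rfl) (h ▸ hq)⟩
  obtain ⟨c₀, hc₀⟩ := hne
  refine isPreconnected_of_forall (pos c₀) fun q ⟨hq, hqx⟩ => ?_
  have hcoreCase : q ∈ core → ∃ t ⊆ DrawSet G pos C \ {pos x},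
      pos c₀ ∈ t ∧ q ∈ t ∧ IsPreconnected t := fun hqc =>
    ⟨core, hcoreT, pos_mem_drawSet hc₀, hqc, hcore⟩
  have hedgeCase : ∀ v ∈ C, x ∈ C → G.Adj v x → q ∈ segment ℝ (pos v) (pos x) →
      ∃ t ⊆ DrawSet G pos C \ {pos x}, pos c₀ ∈ t ∧ q ∈ t ∧ IsPreconnected t := by
    intro v hv hx hvx hqvx
    have hv' : v ∈ C \ {x} := ⟨hv, hvx.ne⟩
    refine ⟨core ∪ insert (pos v) (openSegment ℝ (pos v) (pos x)),
      union_subset hcoreT (hemb.insert_openSegment_subset_drawSet_diff hv hx hvx),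
      Or.inl (pos_mem_drawSet hc₀), Or.inr ?_,
      hcore.union (pos v) (pos_mem_drawSet hv') (mem_insert _ _)
        (isPreconnected_insert_openSegment _ _)⟩
    by_cases hqv : q = pos v
    · exact hqv ▸ mem_insert _ _
    · exact mem_insert_of_mem _ (mem_openSegment_of_ne_left_right (Ne.symm hqv) (Ne.symm hqx) hqvx)
  rcases mem_drawSet_iff.1 hq with ⟨c, hc, rfl⟩ | ⟨u, hu, v, hv, huv, hquv⟩
  · exact hcoreCase (pos_mem_drawSet ⟨hc, fun h => hqx (congrArg pos h)⟩)
  by_cases hux : u = x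
  · subst hux
    exact hedgeCase v hv hu huv.symm (segment_symm ℝ (pos u) (pos v) ▸ hquv)
  by_cases hvx : v = x
  · subst hvx
    exact hedgeCase u hu hv huv hquv
  · exact hcoreCase (segment_subset_drawSet (A := C \ {x}) ⟨hu, hux⟩ ⟨hv, hvx⟩ huv hquv)

lemma isPreconnected_drawSet_diff_image {L B S : Set V} (hB : IsBlockOf G L B)
    (hS : S.Subsingleton) (hne : (B \ S).Nonempty) :
    IsPreconnected (DrawSet G pos B \ pos '' S) := by
  rcases hS.eq_empty_or_singleton with rfl | ⟨x, rfl⟩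
  · simpa using (hB.2.2.1.isPreconnected_drawSet : IsPreconnected (DrawSet G pos B))
  · rw [image_singleton]
    exact hemb.isPreconnected_drawSet_diff_singleton hB.2.2.1 hB.2.2.2.1 hne

end IsPlanarEmb

end Blocks

section Uniqueness

variable {V : Type*} [Finite V] {G : SimpleGraph V} {pos : V → ℝ × ℝ}

namespace IsPlanarEmb

variable (hemb : IsPlanarEmb G pos)
include hemb

/-- The drawing of `B` minus the common vertex is connected and reaches a vertex of `B` that is
drawn on the outer face of `A`, hence outside every region enclosed by `B'`. -/
lemma not_isBounded_of_mem_drawSet_diff {A B B' : Set V}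
    (hB : IsBlockOf G (OuterVerts G pos A) B) (hB' : IsBlockOf G (OuterVerts G pos A) B')
    (hne : B ≠ B') (hedge : ∃ a ∈ B, ∃ b ∈ B, G.Adj a b) :
    ∀ q ∈ DrawSet G pos B \ pos '' (B ∩ B'),
      ¬ IsBounded (connectedComponentIn (DrawSet G pos B')ᶜ q) := by
  have hsub := hB.inter_subsingleton hB' hne
  obtain ⟨c, hcB, hcB'⟩ : ∃ c ∈ B, c ∉ B' := by
    obtain ⟨a, ha, b, hb, hab⟩ := hedge
    by_contra! h
    exact hab.ne (hsub ⟨ha, h a ha⟩ ⟨hb, h b hb⟩)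
  have hS : DrawSet G pos B \ pos '' (B ∩ B') ⊆ (DrawSet G pos B')ᶜ := fun q hq hqB' =>
    hq.2 (hemb.drawSet_inter_subset hsub ⟨hq.1, hqB'⟩)
  have hcS : pos c ∈ DrawSet G pos B \ pos '' (B ∩ B') :=
    ⟨pos_mem_drawSet hcB, fun ⟨d, hd, hdc⟩ => hcB' (hemb.injective hdc ▸ hd.2)⟩
  have hc : ¬ IsBounded (connectedComponentIn (DrawSet G pos B')ᶜ (pos c)) := fun hb =>
    pos_notMem_enclosedRegion (hB'.1.trans (outerVerts_subset A)) (hB.1 hcB)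
      ⟨hemb.pos_notMem_drawSet hcB', hb⟩
  intro q hq
  rwa [← (hemb.isPreconnected_drawSet_diff_image hB hsub ⟨c, hcB, fun h => hcB' h.2⟩)
    |>.connectedComponentIn_eq hS hcS hq]

lemma eq_of_mem_enclosedRegion {A B₁ B₂ : Set V} (h₁ : IsBlockOf G (OuterVerts G pos A) B₁)
    (h₂ : IsBlockOf G (OuterVerts G pos A) B₂) {p : ℝ × ℝ}
    (hp₁ : p ∈ EnclosedRegion G pos B₁) (hp₂ : p ∈ EnclosedRegion G pos B₂) : B₁ = B₂ := by
  by_contra hne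
  have hsub := h₁.inter_subsingleton h₂ hne
  have hZ : IsPreconnected (pos '' (B₁ ∩ B₂))ᶜ :=
    ((hsub.image pos).finite.countable.isPathConnected_compl_of_one_lt_rank
      one_lt_rank_real_prod).isConnected.isPreconnected
  have hZK₁ : pos '' (B₁ ∩ B₂) ⊆ DrawSet G pos B₁ := by
    rintro _ ⟨c, hc, rfl⟩
    exact pos_mem_drawSet hc.1
  have h₂₁ := hemb.not_isBounded_of_mem_drawSet_diff h₂ h₁ (Ne.symm hne)
    (exists_adj_of_mem_enclosedRegion hp₂)
  rw [inter_comm] at h₂₁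
  exact not_isBounded_connectedComponentIn_compl_of_exterior (isClosed_drawSet B₁)
    (isClosed_drawSet B₂) hZ (hsub.image pos).finite.isBounded hZK₁
    (hemb.drawSet_inter_subset hsub)
    (hemb.not_isBounded_of_mem_drawSet_diff h₁ h₂ hne (exists_adj_of_mem_enclosedRegion hp₁))
    h₂₁ hp₁.1 hp₁.2 hp₂.2

lemma isLayerComp_eq_of_mem_enclosedRegion {j : ℕ} {B₁ B₂ : Set V}
    (h₁ : IsLayerComp G pos (j + 1) B₁) (h₂ : IsLayerComp G pos (j + 1) B₂) {p : ℝ × ℝ}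
    (hp₁ : p ∈ EnclosedRegion G pos B₁) (hp₂ : p ∈ EnclosedRegion G pos B₂) : B₁ = B₂ := by
  rw [IsLayerComp, layerSet_succ] at h₁ h₂
  exact hemb.eq_of_mem_enclosedRegion h₁ h₂ hp₁ hp₂

end IsPlanarEmb

end Uniqueness

lemma Set.ncard_le_ncard_of_exists_rel {α β : Type*} {s : Set α} {t : Set β}
    (R : α → β → Prop) (ht : t.Finite) (hex : ∀ a ∈ s, ∃ b ∈ t, R a b)
    (huniq : ∀ a₁ ∈ s, ∀ a₂ ∈ s, ∀ b, R a₁ b → R a₂ b → a₁ = a₂) : s.ncard ≤ t.ncard := by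
  choose f hft hR using hex
  have := ht.to_subtype
  rw [← Nat.card_coe_set_eq, ← Nat.card_coe_set_eq]
  refine Nat.card_le_card_of_injective (fun a : s => (⟨f a a.2, hft a a.2⟩ : t)) ?_
  intro a₁ a₂ h
  have hf : f a₁ a₁.2 = f a₂ a₂.2 := congrArg Subtype.val h
  exact Subtype.ext (huniq a₁ a₁.2 a₂ a₂.2 _ (hf ▸ hR a₁ a₁.2) (hR a₂ a₂.2))

lemma mem_closedNbhd_singleton {V : Type*} {G : SimpleGraph V} {u w : V} :
    u ∈ closedNbhd G {w} ↔ u = w ∨ G.Adj w u := by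
  simp [closedNbhd]

section Counting

variable {V : Type*} {G : SimpleGraph V} {pos : V → ℝ × ℝ}

/-- The dominator of an edge deep inside `C` need not itself lie inside `C`: it may sit on the
layer component `C'` of the next layer, which is why `C'` is recorded. -/
def IsNestedIn (G : SimpleGraph V) (pos : V → ℝ × ℝ) (i : ℕ) (C : Set V) (w : V) : Prop :=
  ∃ C', IsLayerComp G pos (i + 1) C' ∧ (∀ v ∈ C', pos v ∈ EnclosedRegion G pos C) ∧
    (w ∈ C' ∨ pos w ∈ EnclosedRegion G pos C')

variable [Finite V]

namespace IsPlanarEmb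

variable (hemb : IsPlanarEmb G pos)
include hemb

lemma exists_mem_isNestedIn {D : Set V} (hD : IsVeDomSet G D) {j : ℕ} {C : Set V}
    (h3 : SNonVacuous G pos 3 (j + 1) C) :
    ∃ w ∈ D ∩ (LayerSet G pos (j + 2) ∪ LayerSet G pos (j + 3) ∪ LayerSet G pos (j + 4)),
      IsNestedIn G pos (j + 1) C w := by
  obtain ⟨C', hC', ⟨C'', hC'', ⟨x, -, hx⟩, hC''C'⟩, hC'C⟩ := h3
  obtain ⟨a, ha, b, hb, hab⟩ := exists_adj_of_mem_enclosedRegion hx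
  obtain ⟨w, hwD, hdom⟩ := hD a b hab
  obtain ⟨u, huC'', hwu⟩ : ∃ u ∈ C'', u = w ∨ G.Adj w u := by
    rw [mem_closedNbhd_singleton, mem_closedNbhd_singleton] at hdom
    rcases hdom with h | h
    exacts [⟨a, ha, h⟩, ⟨b, hb, h⟩]
  have hu : u ∈ LayerSet G pos (j + 3) := hC''.1 huC''
  rcases hwu with rfl | hwu
  · exact ⟨u, ⟨hwD, Or.inl (Or.inr hu)⟩, C', hC', hC'C, Or.inr (hC''C' u huC'')⟩
  refine ⟨w, ⟨hwD, ?_⟩, C', hC', hC'C, ?_⟩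
  · rcases hemb.mem_layerSet_of_adj (j := j + 1) hwu hu with h | h | h
    exacts [Or.inl (Or.inl h), Or.inl (Or.inr h), Or.inr h]
  · by_cases hw : w ∈ C'
    · exact Or.inl hw
    · have huC' : u ∉ C' := fun h =>
        disjoint_left.1 (disjoint_layerSet_of_lt (by omega)) (hC'.1 h) hu
      exact Or.inr (hemb.pos_mem_enclosedRegion_of_adj hwu hw huC' (hC''C' u huC''))

lemma eq_of_isNestedIn {j : ℕ} {C₁ C₂ : Set V} (h₁ : IsLayerComp G pos (j + 1) C₁)
    (h₂ : IsLayerComp G pos (j + 1) C₂) {w : V} (hw₁ : IsNestedIn G pos (j + 1) C₁ w)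
    (hw₂ : IsNestedIn G pos (j + 1) C₂ w) : C₁ = C₂ := by
  obtain ⟨C₁', h₁', hC₁', hw₁⟩ := hw₁
  obtain ⟨C₂', h₂', hC₂', hw₂⟩ := hw₂
  have hout : ∀ {B B'}, IsLayerComp G pos (j + 2) B → IsLayerComp G pos (j + 2) B' →
      w ∈ B → pos w ∉ EnclosedRegion G pos B' := fun hB hB' hw =>
    pos_notMem_enclosedRegion (hB'.1.trans (layerSet_succ_subset_remainSet _))
      (layerSet_succ (G := G) (pos := pos) (j + 1) ▸ hB.1 hw)
  rcases hw₁ with hw₁ | hw₁ <;> rcases hw₂ with hw₂ | hw₂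
  · exact hemb.isLayerComp_eq_of_mem_enclosedRegion h₁ h₂ (hC₁' w hw₁) (hC₂' w hw₂)
  · exact absurd hw₂ (hout h₁' h₂' hw₁)
  · exact absurd hw₁ (hout h₂' h₁' hw₂)
  · obtain rfl := hemb.isLayerComp_eq_of_mem_enclosedRegion h₁' h₂' hw₁ hw₂
    obtain ⟨v, hv⟩ := h₁'.2.1
    exact hemb.isLayerComp_eq_of_mem_enclosedRegion h₁ h₂ (hC₁' v hv) (hC₂' v hv)

lemma threeNVCount_succ_le {D : Set V} (hD : IsVeDomSet G D) (j : ℕ) :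
    threeNVCount G pos (j + 1) ≤
      layerK G pos D (j + 2) + layerK G pos D (j + 3) + layerK G pos D (j + 4) :=
  calc threeNVCount G pos (j + 1)
      _ ≤ (D ∩ (LayerSet G pos (j + 2) ∪ LayerSet G pos (j + 3) ∪ LayerSet G pos (j + 4))).ncard :=
        ncard_le_ncard_of_exists_rel (IsNestedIn G pos (j + 1)) (toFinite _)
          (fun _ hC => hemb.exists_mem_isNestedIn hD hC.2)
          fun _ hC₁ _ hC₂ _ => hemb.eq_of_isNestedIn hC₁.1 hC₂.1
      _ ≤ _ := by
        rw [inter_union_distrib_left, inter_union_distrib_left]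
        exact (ncard_union_le _ _).trans (Nat.add_le_add_right (ncard_union_le _ _) _)

end IsPlanarEmb

end Counting

/-- For a plane graph `G` with ve-dominating set `D`, the number `c_i` of
`3`-non-vacuous layer components of layer `L_i` satisfies
`c_i ≤ k_{i+1} + k_{i+2} + k_{i+3} + k_{i+4}` where `k_j = |D ∩ L_j|`. -/
theorem threeNVCount_le
    {V : Type*} [Fintype V] (G : SimpleGraph V) (pos : V → ℝ × ℝ)
    (hemb : IsPlanarEmb G pos) (D : Set V) (hD : IsVeDomSet G D) :
    ∀ i : ℕ, threeNVCount G pos i ≤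
      layerK G pos D (i + 1) + layerK G pos D (i + 2) +
        layerK G pos D (i + 3) + layerK G pos D (i + 4) := by
  rintro (_ | j)
  · simp [threeNVCount_zero]
  · simp only [Nat.add_assoc, Nat.reduceAdd]
    have := hemb.threeNVCount_succ_le hD j
    omega
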